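/- For every color c ∈ [k] and every ℓ, define α_{c,ℓ} = E_{X∼μ_ℓ}[|μ^↑_{X,ℓ}(c) − 1/k|] (the expectation over the leaf-marginal of μ_ℓ) and β_{c,ℓ} = |μ^{↓↑}_{c,ℓ}(c) − 1/k|. Then β_{c,ℓ}/(k−1) ≤ α_{c,ℓ} ≤ √(β_{c,ℓ}). -/

import Mathlib

/-- Vertices of the complete rooted tree of depth `ℓ` and branching factor `Δ`:
a vertex is the path leading to it from the root, i.e. a pair of a depth `i ≤ ℓ`
and a function `Fin i → Fin Δ`. -/
abbrev TVertex (Δ ℓ : ℕ) : Type := Σ i : Fin (ℓ + 1), Fin i.val → Fin Δ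

/-- The root of the tree. -/
def troot (Δ ℓ : ℕ) : TVertex Δ ℓ := ⟨⟨0, Nat.succ_pos ℓ⟩, fun i => i.elim0⟩

/-- The `j`-th child of a vertex `v` of depth `< ℓ`. -/
def tchild {Δ ℓ : ℕ} (v : TVertex Δ ℓ) (h : v.1.val < ℓ) (j : Fin Δ) : TVertex Δ ℓ :=
  ⟨⟨v.1.val + 1, Nat.succ_lt_succ h⟩, Fin.snoc v.2 j⟩

/-- A proper `k`-coloring of the tree: adjacent (parent/child) vertices get distinct colors. -/
def ProperColoring (Δ ℓ k : ℕ) (σ : TVertex Δ ℓ → Fin k) : Prop :=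
  ∀ (v : TVertex Δ ℓ) (h : v.1.val < ℓ) (j : Fin Δ), σ v ≠ σ (tchild v h j)

/-- The leaf determined by a root-to-leaf path. -/
def leafVertex {Δ ℓ : ℕ} (f : Fin ℓ → Fin Δ) : TVertex Δ ℓ := ⟨⟨ℓ, Nat.lt_succ_self ℓ⟩, f⟩

/-- Restriction of a coloring of the tree to the leaves. -/
def leafColoring {Δ ℓ k : ℕ} (σ : TVertex Δ ℓ → Fin k) : (Fin ℓ → Fin Δ) → Fin k :=
  fun f => σ (leafVertex f)

/-- A total leaf coloring, viewed as a partial one (no `⋆`s). -/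
def toPartial {Δ ℓ k : ℕ} (X : (Fin ℓ → Fin Δ) → Fin k) : (Fin ℓ → Fin Δ) → Option (Fin k) :=
  fun f => some (X f)

/-- Probability of the event `E` under the uniform measure `μ_ℓ` on proper colorings. -/
noncomputable def treeProb (Δ ℓ k : ℕ) (E : (TVertex Δ ℓ → Fin k) → Prop) : ℝ :=
  (Nat.card {σ : TVertex Δ ℓ → Fin k // ProperColoring Δ ℓ k σ ∧ E σ} : ℝ) /
    (Nat.card {σ : TVertex Δ ℓ → Fin k // ProperColoring Δ ℓ k σ} : ℝ)

/-- Expectation of `f` under the uniform measure `μ_ℓ` on proper colorings. -/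
noncomputable def treeExp (Δ ℓ k : ℕ) (f : (TVertex Δ ℓ → Fin k) → ℝ) : ℝ :=
  (∑ σ : TVertex Δ ℓ → Fin k, Set.indicator {σ | ProperColoring Δ ℓ k σ} f σ) /
    (Nat.card {σ : TVertex Δ ℓ → Fin k // ProperColoring Δ ℓ k σ} : ℝ)

/-- `σ` agrees with the partial leaf coloring `X` on every leaf colored by `X`. -/
def AgreesOn {Δ ℓ k : ℕ} (σ : TVertex Δ ℓ → Fin k) (X : (Fin ℓ → Fin Δ) → Option (Fin k)) : Prop :=
  ∀ (f : Fin ℓ → Fin Δ) (c : Fin k), X f = some c → leafColoring σ f = c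

/-- `X` is an allowed partial coloring of the leaves. -/
def AllowedP (Δ ℓ k : ℕ) (X : (Fin ℓ → Fin Δ) → Option (Fin k)) : Prop :=
  ∃ σ, ProperColoring Δ ℓ k σ ∧ AgreesOn σ X

/-- `μ_ℓ(σ(root) = c | σ` agrees with `X` at the leaves`)`. -/
noncomputable def condProbRootP (Δ ℓ k : ℕ) (X : (Fin ℓ → Fin Δ) → Option (Fin k))
    (c : Fin k) : ℝ :=
  (Nat.card {σ : TVertex Δ ℓ → Fin k //
      ProperColoring Δ ℓ k σ ∧ AgreesOn σ X ∧ σ (troot Δ ℓ) = c} : ℝ) /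
    (Nat.card {σ : TVertex Δ ℓ → Fin k // ProperColoring Δ ℓ k σ ∧ AgreesOn σ X} : ℝ)

/-- Restriction of a vector indexed by the leaves of `T_{ℓ+1}` to the leaves below
the `j`-th child of the root. -/
def childRestrict {Δ ℓ : ℕ} {β : Sort*} (X : (Fin (ℓ + 1) → Fin Δ) → β) (j : Fin Δ) :
    (Fin ℓ → Fin Δ) → β := fun g => X (Fin.cons j g)

/-- The recursively defined quantity `P_h(X, c)`. -/
noncomputable def Pfun (Δ k : ℕ) : (h : ℕ) → ((Fin h → Fin Δ) → Option (Fin k)) → Fin k → ℝ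
  | 0, X, c =>
    match X (fun i => i.elim0) with
    | none => 1 / (k : ℝ)
    | some d => if d = c then 1 else 0
  | h + 1, X, c =>
    (∏ j : Fin Δ, (1 - Pfun Δ k h (childRestrict X j) c)) /
      ∑ d : Fin k, ∏ j : Fin Δ, (1 - Pfun Δ k h (childRestrict X j) d)

/-- Unbiasing partial colorings of the leaves of `T_ℓ` (meaningful for `ℓ ≥ 1`). -/
def Unbiasing (Δ k : ℕ) (ε : ℝ) : (ℓ : ℕ) → ((Fin ℓ → Fin Δ) → Option (Fin k)) → Prop
  | 0, _ => True
  | 1, X => (Δ : ℝ) ^ (ε / 2) ≤ (Nat.card {c : Fin k // ∀ f, X f ≠ some c} : ℝ)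
  | ℓ + 2, X =>
      (Nat.card {j : Fin Δ // ¬ Unbiasing Δ k ε (ℓ + 1) (childRestrict X j)} : ℝ) ≤
        (Δ : ℝ) ^ ((1 : ℝ) - ε)

/-- Auxiliary notion: every subtree vertex of height `≥ t` has an unbiasing restriction. -/
def HighlyUnbiasingAux (Δ k : ℕ) (ε t : ℝ) :
    (h : ℕ) → ((Fin h → Fin Δ) → Option (Fin k)) → Prop
  | 0, _ => True
  | h + 1, X => ((t ≤ (h : ℝ) + 1) → Unbiasing Δ k ε (h + 1) X) ∧
      ∀ j : Fin Δ, HighlyUnbiasingAux Δ k ε t h (childRestrict X j)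

/-- Highly unbiasing partial colorings of the leaves of `T_ℓ`: the restriction to the
leaves below `v` is unbiasing for every vertex `v` at distance `≥ εℓ` from the leaves. -/
def HighlyUnbiasing (Δ k : ℕ) (ε : ℝ) (ℓ : ℕ) (X : (Fin ℓ → Fin Δ) → Option (Fin k)) : Prop :=
  HighlyUnbiasingAux Δ k ε (ε * ℓ) ℓ X

/-- `μ↓_{c,ℓ}`: the distribution of the leaf coloring conditioned on the root color `c`. -/
noncomputable def downDist (Δ ℓ k : ℕ) (c : Fin k) (X : (Fin ℓ → Fin Δ) → Fin k) : ℝ :=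
  (Nat.card {σ : TVertex Δ ℓ → Fin k //
      ProperColoring Δ ℓ k σ ∧ σ (troot Δ ℓ) = c ∧ leafColoring σ = X} : ℝ) /
    (Nat.card {σ : TVertex Δ ℓ → Fin k // ProperColoring Δ ℓ k σ ∧ σ (troot Δ ℓ) = c} : ℝ)

/-- `μ↑_{X,ℓ}`: the distribution of the root color given the (total) leaf coloring `X`. -/
noncomputable def upDist (Δ ℓ k : ℕ) (X : (Fin ℓ → Fin Δ) → Fin k) (c : Fin k) : ℝ :=
  condProbRootP Δ ℓ k (toPartial X) c

/-- `μ↓↑_{c,ℓ}`: sample leaves from `μ↓_{c,ℓ}`, then a root color from `μ↑`. -/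
noncomputable def downUp (Δ ℓ k : ℕ) (c c' : Fin k) : ℝ :=
  ∑ X : (Fin ℓ → Fin Δ) → Fin k, downDist Δ ℓ k c X * upDist Δ ℓ k X c'

/-- Hamming distance between two leaf colorings. -/
noncomputable def leafHamming {Δ ℓ k : ℕ} (X Y : (Fin ℓ → Fin Δ) → Fin k) : ℕ :=
  Nat.card {f : Fin ℓ → Fin Δ // X f ≠ Y f}

/-- Total variation distance between two distributions on `Fin k`. -/
noncomputable def tvDist {k : ℕ} (p q : Fin k → ℝ) : ℝ :=
  (∑ c : Fin k, |p c - q c|) / 2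

/-- `ν` is a coupling of the distributions `p` and `q`. -/
def IsCoupling {α β : Type*} [Fintype α] [Fintype β] (ν : α × β → ℝ)
    (p : α → ℝ) (q : β → ℝ) : Prop :=
  (∀ z, 0 ≤ ν z) ∧ (∀ x, ∑ y : β, ν (x, y) = p x) ∧ (∀ y, ∑ x : α, ν (x, y) = q y)

/-!
Let `w X` be the `μ_ℓ`-probability of the leaf coloring `X` and `p X = μ↑_{X,ℓ}(c)`. Permuting
colors shows that the root color is uniform, so `∑ w p = 1/k`, and Bayes gives
`μ↓_{c,ℓ}(X) = k w X p X`; hence `β = k · ∑ w (p - 1/k)²` while `α = ∑ w |p - 1/k|`.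
As `|p - 1/k| ≤ 1 - 1/k`, the weighted variance is at most `(1 - 1/k) α`, and by Jensen
`α² ≤ ∑ w (p - 1/k)²`.
-/

open Finset

section WeightedMean

variable {ι : Type*} {s : Finset ι} {w p : ι → ℝ}

theorem sum_mul_sub_sq_eq (hw : ∑ i ∈ s, w i = 1) {m : ℝ} (hm : ∑ i ∈ s, w i * p i = m) :
    ∑ i ∈ s, w i * (p i - m) ^ 2 = ∑ i ∈ s, w i * p i ^ 2 - m ^ 2 := by
  have h : ∀ i ∈ s, w i * (p i - m) ^ 2 = w i * p i ^ 2 - 2 * m * (w i * p i) + m ^ 2 * w i :=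
    fun i _ => by ring
  rw [sum_congr rfl h, sum_add_distrib, sum_sub_distrib, ← mul_sum, ← mul_sum, hm, hw]
  ring

theorem sq_sum_mul_abs_le (hw0 : ∀ i ∈ s, 0 ≤ w i) (hw : ∑ i ∈ s, w i = 1) (q : ι → ℝ) :
    (∑ i ∈ s, w i * |q i|) ^ 2 ≤ ∑ i ∈ s, w i * q i ^ 2 := by
  simpa only [smul_eq_mul, sq_abs] using
    (convexOn_pow 2).map_sum_le hw0 hw fun i _ => Set.mem_Ici.2 (abs_nonneg (q i))

theorem weighted_variance_bounds {k : ℝ} (hk : 2 ≤ k) (hw0 : ∀ i ∈ s, 0 ≤ w i)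
    (hw : ∑ i ∈ s, w i = 1) (hp0 : ∀ i ∈ s, 0 ≤ p i) (hp1 : ∀ i ∈ s, p i ≤ 1)
    (hmean : ∑ i ∈ s, w i * p i = 1 / k) :
    |k * ∑ i ∈ s, w i * p i ^ 2 - 1 / k| / (k - 1) ≤ ∑ i ∈ s, w i * |p i - 1 / k| ∧
      ∑ i ∈ s, w i * |p i - 1 / k| ≤ √|k * ∑ i ∈ s, w i * p i ^ 2 - 1 / k| := by
  have hk0 : 0 < k := by linarith
  set V := ∑ i ∈ s, w i * (p i - 1 / k) ^ 2 with hV_def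
  have hV : 0 ≤ V := sum_nonneg fun i hi => mul_nonneg (hw0 i hi) (sq_nonneg _)
  have hβ : |k * ∑ i ∈ s, w i * p i ^ 2 - 1 / k| = k * V := by
    have hβ' : k * ∑ i ∈ s, w i * p i ^ 2 - 1 / k = k * V := by
      rw [hV_def, sum_mul_sub_sq_eq hw hmean]
      field_simp
    rw [hβ', abs_of_nonneg (by positivity)]
  rw [hβ]
  constructor
  · have hdev : ∀ i ∈ s, k * |p i - 1 / k| ≤ k - 1 := fun i hi => by
      have : |p i - 1 / k| ≤ 1 - 1 / k := by
        have : 1 / k ≤ 1 / 2 := one_div_le_one_div_of_le two_pos hk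
        exact abs_le.2 ⟨by linarith [hp0 i hi], by linarith [hp1 i hi]⟩
      calc k * |p i - 1 / k| ≤ k * (1 - 1 / k) := by gcongr
        _ = k - 1 := by field_simp
    rw [div_le_iff₀ (by linarith), mul_sum, sum_mul]
    refine sum_le_sum fun i hi => ?_
    calc k * (w i * (p i - 1 / k) ^ 2) = w i * |p i - 1 / k| * (k * |p i - 1 / k|) := by
          rw [← sq_abs]; ring
      _ ≤ w i * |p i - 1 / k| * (k - 1) := by
          gcongr
          · exact mul_nonneg (hw0 i hi) (abs_nonneg _)
          · exact hdev i hi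
  · calc ∑ i ∈ s, w i * |p i - 1 / k| = √((∑ i ∈ s, w i * |p i - 1 / k|) ^ 2) :=
          (Real.sqrt_sq (sum_nonneg fun i hi => mul_nonneg (hw0 i hi) (abs_nonneg _))).symm
      _ ≤ √V := Real.sqrt_le_sqrt (sq_sum_mul_abs_le hw0 hw _)
      _ ≤ √(k * V) := Real.sqrt_le_sqrt (le_mul_of_one_le_left hV (by linarith))

end WeightedMean

theorem Nat.card_subtype_eq_sum_fiberwise {α β : Type*} [Fintype α] [Fintype β]
    (q : α → Prop) (f : α → β) :
    Nat.card {a // q a} = ∑ b, Nat.card {a // q a ∧ f a = b} := by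
  classical
  simp only [Nat.card_eq_fintype_card, Fintype.card_subtype]
  rw [card_eq_sum_card_fiberwise (f := f) (t := univ) fun _ _ => mem_coe.2 (mem_univ _)]
  simp only [filter_filter]

theorem exists_properColoring (Δ ℓ : ℕ) {k : ℕ} (hk : 2 ≤ k) :
    ∃ σ : TVertex Δ ℓ → Fin k, ProperColoring Δ ℓ k σ := by
  refine ⟨fun v => if Even v.1.val then ⟨0, by omega⟩ else ⟨1, by omega⟩, fun v h j => ?_⟩
  have hdepth : (tchild v h j).1.val = v.1.val + 1 := rfl
  by_cases he : Even v.1.val <;> simp [hdepth, he, Nat.even_add_one, Fin.ext_iff]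

theorem ProperColoring.comp_equiv {Δ ℓ k : ℕ} {σ : TVertex Δ ℓ → Fin k}
    (hσ : ProperColoring Δ ℓ k σ) (e : Fin k ≃ Fin k) : ProperColoring Δ ℓ k (e ∘ σ) :=
  fun v hv j h => hσ v hv j (e.injective h)

theorem agreesOn_toPartial_iff {Δ ℓ k : ℕ} (σ : TVertex Δ ℓ → Fin k)
    (X : (Fin ℓ → Fin Δ) → Fin k) : AgreesOn σ (toPartial X) ↔ leafColoring σ = X :=
  ⟨fun h => funext fun f => h f (X f) rfl, by rintro rfl f c hc; exact Option.some_injective _ hc⟩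

section TreeProb

variable {Δ ℓ k : ℕ}

theorem treeProb_nonneg (E : (TVertex Δ ℓ → Fin k) → Prop) : 0 ≤ treeProb Δ ℓ k E := by
  unfold treeProb; positivity

theorem treeProb_mono {E F : (TVertex Δ ℓ → Fin k) → Prop} (h : ∀ σ, E σ → F σ) :
    treeProb Δ ℓ k E ≤ treeProb Δ ℓ k F := by
  unfold treeProb
  gcongr
  exact Nat.card_mono (Set.toFinite _) fun σ hσ => ⟨hσ.1, h σ hσ.2⟩

theorem card_properColoring_ne_zero (hk : 2 ≤ k) :
    (Nat.card {σ : TVertex Δ ℓ → Fin k // ProperColoring Δ ℓ k σ} : ℝ) ≠ 0 := by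
  have : Nonempty {σ : TVertex Δ ℓ → Fin k // ProperColoring Δ ℓ k σ} :=
    (exists_properColoring Δ ℓ hk).elim fun σ hσ => ⟨⟨σ, hσ⟩⟩
  exact_mod_cast Nat.card_pos.ne'

theorem treeProb_true (hk : 2 ≤ k) : treeProb Δ ℓ k (fun _ => True) = 1 := by
  unfold treeProb
  simp only [and_true]
  exact div_self (card_properColoring_ne_zero hk)

theorem sum_treeProb_and_eq {β : Type*} [Fintype β] (E : (TVertex Δ ℓ → Fin k) → Prop)
    (g : (TVertex Δ ℓ → Fin k) → β) :
    ∑ b, treeProb Δ ℓ k (fun σ => E σ ∧ g σ = b) = treeProb Δ ℓ k E := by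
  unfold treeProb
  rw [← sum_div, Nat.card_subtype_eq_sum_fiberwise (fun σ => ProperColoring Δ ℓ k σ ∧ E σ) g]
  simp only [and_assoc, Nat.cast_sum]

theorem treeProb_div_treeProb (hk : 2 ≤ k) (E F : (TVertex Δ ℓ → Fin k) → Prop) :
    treeProb Δ ℓ k E / treeProb Δ ℓ k F =
      (Nat.card {σ // ProperColoring Δ ℓ k σ ∧ E σ} : ℝ) /
        Nat.card {σ // ProperColoring Δ ℓ k σ ∧ F σ} :=
  div_div_div_cancel_right₀ (card_properColoring_ne_zero hk) _ _

theorem treeExp_comp {β : Type*} [Fintype β] (g : (TVertex Δ ℓ → Fin k) → β) (F : β → ℝ) :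
    treeExp Δ ℓ k (fun σ => F (g σ)) = ∑ b, treeProb Δ ℓ k (fun σ => g σ = b) * F b := by
  classical
  unfold treeExp treeProb
  simp only [div_mul_eq_mul_div, ← sum_div, Set.indicator_apply, Set.mem_ofPred_eq, ← sum_filter]
  congr 1
  rw [← sum_fiberwise _ g]
  refine sum_congr rfl fun b _ => ?_
  rw [sum_congr rfl fun σ hσ => congrArg F (mem_filter.1 hσ).2, sum_const, nsmul_eq_mul,
    Nat.card_eq_fintype_card, Fintype.card_subtype, filter_filter]

theorem treeProb_root_eq_treeProb_root (c c' : Fin k) :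
    treeProb Δ ℓ k (fun σ => σ (troot Δ ℓ) = c) =
      treeProb Δ ℓ k (fun σ => σ (troot Δ ℓ) = c') := by
  unfold treeProb
  congr 2
  refine Nat.card_congr ⟨fun σ => ⟨Equiv.swap c c' ∘ σ.1, σ.2.1.comp_equiv _, ?_⟩,
    fun σ => ⟨Equiv.swap c c' ∘ σ.1, σ.2.1.comp_equiv _, ?_⟩, fun σ => ?_, fun σ => ?_⟩
  · simp [σ.2.2]
  · simp [σ.2.2]
  · ext1; funext v; simp
  · ext1; funext v; simp

theorem treeProb_root_eq (hk : 2 ≤ k) (c : Fin k) :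
    treeProb Δ ℓ k (fun σ => σ (troot Δ ℓ) = c) = 1 / k := by
  have htotal := sum_treeProb_and_eq (Δ := Δ) (ℓ := ℓ) (k := k) (fun _ => True) (· (troot Δ ℓ))
  simp only [true_and, treeProb_root_eq_treeProb_root _ c, sum_const, card_univ,
    Fintype.card_fin, nsmul_eq_mul, treeProb_true hk] at htotal
  field_simp
  linarith

theorem upDist_nonneg (X : (Fin ℓ → Fin Δ) → Fin k) (c : Fin k) : 0 ≤ upDist Δ ℓ k X c := by
  unfold upDist condProbRootP; positivity

theorem upDist_eq_div (hk : 2 ≤ k) (X : (Fin ℓ → Fin Δ) → Fin k) (c : Fin k) :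
    upDist Δ ℓ k X c = treeProb Δ ℓ k (fun σ => σ (troot Δ ℓ) = c ∧ leafColoring σ = X) /
      treeProb Δ ℓ k (fun σ => leafColoring σ = X) := by
  rw [treeProb_div_treeProb hk]
  simp only [upDist, condProbRootP, agreesOn_toPartial_iff, and_comm (a := leafColoring _ = X)]

theorem upDist_le_one (hk : 2 ≤ k) (X : (Fin ℓ → Fin Δ) → Fin k) (c : Fin k) :
    upDist Δ ℓ k X c ≤ 1 := by
  rw [upDist_eq_div hk]
  exact div_le_one_of_le₀ (treeProb_mono fun _ h => h.2) (treeProb_nonneg _)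

theorem sum_treeProb_leafColoring (hk : 2 ≤ k) :
    ∑ X, treeProb Δ ℓ k (fun σ => leafColoring σ = X) = 1 := by
  simpa only [true_and, treeProb_true hk] using
    sum_treeProb_and_eq (Δ := Δ) (ℓ := ℓ) (k := k) (fun _ => True) leafColoring

theorem treeProb_leafColoring_mul_upDist (hk : 2 ≤ k) (X : (Fin ℓ → Fin Δ) → Fin k)
    (c : Fin k) :
    treeProb Δ ℓ k (fun σ => leafColoring σ = X) * upDist Δ ℓ k X c =
      treeProb Δ ℓ k (fun σ => σ (troot Δ ℓ) = c ∧ leafColoring σ = X) := by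
  rw [upDist_eq_div hk]
  rcases (treeProb_nonneg (fun σ => leafColoring σ = X)).eq_or_lt with h | h
  · rw [← h, zero_mul]
    exact le_antisymm (treeProb_nonneg _) ((treeProb_mono fun _ hσ => hσ.2).trans h.ge)
  · exact mul_div_cancel₀ _ h.ne'

theorem sum_treeProb_leafColoring_mul_upDist (hk : 2 ≤ k) (c : Fin k) :
    ∑ X, treeProb Δ ℓ k (fun σ => leafColoring σ = X) * upDist Δ ℓ k X c = 1 / k := by
  simp only [treeProb_leafColoring_mul_upDist hk]
  rw [sum_treeProb_and_eq, treeProb_root_eq hk]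

theorem downUp_self_eq (hk : 2 ≤ k) (c : Fin k) :
    downUp Δ ℓ k c c =
      k * ∑ X, treeProb Δ ℓ k (fun σ => leafColoring σ = X) * upDist Δ ℓ k X c ^ 2 := by
  have hdown : ∀ X, downDist Δ ℓ k c X =
      k * (treeProb Δ ℓ k (fun σ => leafColoring σ = X) * upDist Δ ℓ k X c) := fun X => by
    have hbayes : downDist Δ ℓ k c X =
        treeProb Δ ℓ k (fun σ => σ (troot Δ ℓ) = c ∧ leafColoring σ = X) /
          treeProb Δ ℓ k (fun σ => σ (troot Δ ℓ) = c) :=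
      (treeProb_div_treeProb hk _ _).symm
    rw [hbayes, treeProb_leafColoring_mul_upDist hk, treeProb_root_eq hk]
    field_simp
  simp only [downUp, hdown, mul_sum]
  exact sum_congr rfl fun X _ => by ring

end TreeProb

theorem alpha_beta_equivalence_general (Δ k : ℕ) (hk : 2 ≤ k) (ℓ : ℕ) (c : Fin k) :
    |downUp Δ ℓ k c c - 1 / (k : ℝ)| / ((k : ℝ) - 1) ≤
        treeExp Δ ℓ k (fun σ => |upDist Δ ℓ k (leafColoring σ) c - 1 / (k : ℝ)|) ∧
      treeExp Δ ℓ k (fun σ => |upDist Δ ℓ k (leafColoring σ) c - 1 / (k : ℝ)|) ≤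
        Real.sqrt |downUp Δ ℓ k c c - 1 / (k : ℝ)| := by
  rw [downUp_self_eq hk, treeExp_comp leafColoring fun X => |upDist Δ ℓ k X c - 1 / (k : ℝ)|]
  exact weighted_variance_bounds (by exact_mod_cast hk) (fun _ _ => treeProb_nonneg _)
    (sum_treeProb_leafColoring hk) (fun X _ => upDist_nonneg X c)
    (fun X _ => upDist_le_one hk X c) (sum_treeProb_leafColoring_mul_upDist hk c)

/-- Proposition 21 of the paper: equivalence, up to polynomial factors,
of the two forms of decay of correlation: with
`α_{c,ℓ} = E_{X∼μ_ℓ}[|μ↑_{X,ℓ}(c) − 1/k|]` and `β_{c,ℓ} = |μ↓↑_{c,ℓ}(c) − 1/k|`,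
one has `β_{c,ℓ}/(k−1) ≤ α_{c,ℓ} ≤ √β_{c,ℓ}`. -/
theorem alpha_beta_equivalence (Δ k : ℕ) (hΔ : 2 ≤ Δ) (hk : 2 ≤ k) (ℓ : ℕ) (c : Fin k) :
    |downUp Δ ℓ k c c - 1 / (k : ℝ)| / ((k : ℝ) - 1) ≤
        treeExp Δ ℓ k (fun σ => |upDist Δ ℓ k (leafColoring σ) c - 1 / (k : ℝ)|) ∧
      treeExp Δ ℓ k (fun σ => |upDist Δ ℓ k (leafColoring σ) c - 1 / (k : ℝ)|) ≤
        Real.sqrt |downUp Δ ℓ k c c - 1 / (k : ℝ)| :=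
  alpha_beta_equivalence_general Δ k hk ℓ c
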